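/- (Convergence under Case 2*.) Suppose Assumption 1 holds. Fix w ∈ ℝ^d, set g = ∇f(w), H = ∇²f(w) and H_i = ∇²f_i(w); fix any G ≥ ‖g‖ and set L = ((1/m)∑_{i=1}^m K_i)² + ((1/m)∑_{i=1}^m L_i)·G. Let φ > 0 and for each i let v_i ∈ ℝ^d satisfy ‖(H_i² + φ²I)v_i − H_i g‖ ≤ ε_i‖H_i g‖ with constants ε_i ∈ [0,1). Let p = −(1/m)∑_{i=1}^m v_i, and suppose ⟨p, Hg⟩ ≤ −θ‖g‖² for some θ > 0. Let ρ ∈ (0,1), c = (1/φ)·(1 + (1/m)∑_{i=1}^m ε_i(K_i² + φ²)/φ²) and τ̃₂ = 2(1−ρ)θ/(Lc²). Then for every α ∈ (0, τ̃₂]: ‖∇f(w + αp)‖² ≤ ‖g‖² + 2αρ⟨p, Hg⟩ ≤ (1 − 2αρθ)‖g‖²; in particular ‖∇f(w + τ̃₂p)‖² ≤ (1 − 2τ̃₂ρθ)‖g‖². Moreover, if g ≠ 0 then necessarily θ ≤ c√L, which implies 0 ≤ 1 − 2τ̃₂ρθ < 1. -/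

import Mathlib

set_option maxHeartbeats 4000000


open scoped RealInnerProductSpace

/-- The average function `f = (1/m) ∑ᵢ fᵢ`. -/
noncomputable def avgFun {d m : ℕ} (f : Fin m → EuclideanSpace ℝ (Fin d) → ℝ) :
    EuclideanSpace ℝ (Fin d) → ℝ :=
  fun w => (1 / (m : ℝ)) * ∑ i, f i w

/-- The gradient `∇f` of the average function. -/
noncomputable def gradF {d m : ℕ} (f : Fin m → EuclideanSpace ℝ (Fin d) → ℝ)
    (w : EuclideanSpace ℝ (Fin d)) : EuclideanSpace ℝ (Fin d) :=
  gradient (avgFun f) w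

/-- The Hessian `∇²f` of the average function, as a continuous linear map. -/
noncomputable def hessF {d m : ℕ} (f : Fin m → EuclideanSpace ℝ (Fin d) → ℝ)
    (w : EuclideanSpace ℝ (Fin d)) :
    EuclideanSpace ℝ (Fin d) →L[ℝ] EuclideanSpace ℝ (Fin d) :=
  fderiv ℝ (gradient (avgFun f)) w

/-- The Hessian `∇²fᵢ` of a single function, as a continuous linear map. -/
noncomputable def hessI {d : ℕ} (g : EuclideanSpace ℝ (Fin d) → ℝ)
    (w : EuclideanSpace ℝ (Fin d)) :
    EuclideanSpace ℝ (Fin d) →L[ℝ] EuclideanSpace ℝ (Fin d) :=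
  fderiv ℝ (gradient g) w

/-- The Lipschitz constant `L = ((1/m)∑Kᵢ)² + ((1/m)∑Lᵢ)·G`. -/
noncomputable def Lconst {m : ℕ} (K L : Fin m → ℝ) (G : ℝ) : ℝ :=
  ((1 / (m : ℝ)) * ∑ i, K i) ^ 2 + ((1 / (m : ℝ)) * ∑ i, L i) * G

/-- The regularized operator `H̃ᵀH̃ = H² + φ²I`. -/
noncomputable def Mreg {d : ℕ}
    (H : EuclideanSpace ℝ (Fin d) →L[ℝ] EuclideanSpace ℝ (Fin d)) (φ : ℝ) :
    EuclideanSpace ℝ (Fin d) →L[ℝ] EuclideanSpace ℝ (Fin d) :=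
  H * H + φ ^ 2 • 1


section Helpers

open InnerProductSpace

variable {d m : ℕ}
local notation "E" => EuclideanSpace ℝ (Fin d)

theorem grad_contDiff (g : E → ℝ) (hg : ContDiff ℝ 2 g) : ContDiff ℝ 1 (gradient g) := by
  have h1 : ContDiff ℝ 1 (fderiv ℝ g) := hg.fderiv_right (by norm_num)
  exact ((toDual ℝ E).symm.contDiff).comp h1

theorem inner_grad (g : E → ℝ) (y v : E) : ⟪gradient g y, v⟫ = fderiv ℝ g y v :=
  toDual_symm_apply

theorem hess_apply_eq (g : E → ℝ) (hg : ContDiff ℝ 2 g) (x v z : E) :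
    ⟪fderiv ℝ (gradient g) x z, v⟫ = fderiv ℝ (fderiv ℝ g) x z v := by
  have hd : DifferentiableAt ℝ (fderiv ℝ g) x :=
    ((hg.fderiv_right (m := 1) (by norm_num)).differentiable (by norm_num)) x
  have hgd : DifferentiableAt ℝ (gradient g) x :=
    ((grad_contDiff g hg).differentiable (by norm_num)) x
  have hA1 := (hgd.hasFDerivAt.inner ℝ (hasFDerivAt_const v x))
  have hA2 := hd.hasFDerivAt.clm_apply (hasFDerivAt_const v x)
  have heq : (fun y => ⟪gradient g y, v⟫) = fun y => fderiv ℝ g y v := by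
    funext y; exact inner_grad g y v
  rw [heq] at hA1
  have := hA1.unique hA2
  have h2 := congrArg (fun (T : E →L[ℝ] ℝ) => T z) this
  simpa [fderivInnerCLM_apply, real_inner_comm] using h2

theorem hess_symm (g : E → ℝ) (hg : ContDiff ℝ 2 g) (x u v : E) :
    ⟪fderiv ℝ (gradient g) x u, v⟫ = ⟪u, fderiv ℝ (gradient g) x v⟫ := by
  have hs : IsSymmSndFDerivAt ℝ g x := hg.contDiffAt.isSymmSndFDerivAt (by simp [minSmoothness_of_isRCLikeNormedField])
  rw [hess_apply_eq g hg x v u, real_inner_comm, hess_apply_eq g hg x u v, hs u v]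

theorem avg_contDiff (f : Fin m → E → ℝ) (hf : ∀ i, ContDiff ℝ 2 (f i)) :
    ContDiff ℝ 2 (avgFun f) :=
  contDiff_const.mul (ContDiff.sum fun i _ => hf i)

theorem grad_avg (f : Fin m → E → ℝ) (hf : ∀ i, ContDiff ℝ 2 (f i)) (x : E) :
    gradient (avgFun f) x = (1 / (m:ℝ)) • ∑ i, gradient (f i) x := by
  have hdi : ∀ i ∈ Finset.univ, DifferentiableAt ℝ (f i) x := fun i _ =>
    ((hf i).differentiable (by norm_num)) x
  have h1 : fderiv ℝ (avgFun f) x = (1 / (m:ℝ)) • ∑ i, fderiv ℝ (f i) x := by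
    unfold avgFun
    rw [fderiv_const_mul (DifferentiableAt.fun_sum hdi), fderiv_fun_sum hdi]
  show (toDual ℝ E).symm (fderiv ℝ (avgFun f) x) = _
  rw [h1, map_smulₛₗ, map_sum]
  simp [gradient]

theorem hessF_sum (f : Fin m → E → ℝ) (hf : ∀ i, ContDiff ℝ 2 (f i)) (x : E) :
    fderiv ℝ (gradient (avgFun f)) x
      = (1 / (m:ℝ)) • ∑ i, fderiv ℝ (gradient (f i)) x := by
  have hgi : ∀ i ∈ Finset.univ, DifferentiableAt ℝ (gradient (f i)) x := fun i _ =>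
    ((grad_contDiff (f i) (hf i)).differentiable (by norm_num)) x
  have heq : gradient (avgFun f) = fun x => (1 / (m:ℝ)) • ∑ i, gradient (f i) x :=
    funext (grad_avg f hf)
  rw [heq, fderiv_fun_const_smul (DifferentiableAt.fun_sum hgi), fderiv_fun_sum hgi]

theorem hess_norm_le (g : E → ℝ) (Kg : ℝ) (hKg : 0 ≤ Kg)
    (hgrad : ∀ x y : E, ‖gradient g x - gradient g y‖ ≤ Kg * ‖x - y‖) (x : E) :
    ‖fderiv ℝ (gradient g) x‖ ≤ Kg := by
  have lip : LipschitzWith Kg.toNNReal (gradient g) := LipschitzWith.of_dist_le_mul fun a b => by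
    simpa [dist_eq_norm, Real.coe_toNNReal Kg hKg] using hgrad a b
  have h := norm_fderiv_le_of_lipschitz ℝ lip (x₀ := x)
  rwa [Real.coe_toNNReal Kg hKg] at h

theorem descent_core (N : E → E) (B : E → (E →L[ℝ] E))
    (hN : ∀ x, HasFDerivAt N (B x) x)
    (Kb Lb : ℝ) (hKb : 0 ≤ Kb) (hLb : 0 ≤ Lb)
    (hLip : ∀ x y, ‖N x - N y‖ ≤ Kb * ‖x - y‖)
    (hBLip : ∀ x y, ‖B x - B y‖ ≤ Lb * ‖x - y‖)
    (w p : E) (G : ℝ) (hG : ‖N w‖ ≤ G) (α : ℝ) (hα : 0 ≤ α) :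
    ‖N (w + α • p)‖^2 ≤ ‖N w‖^2 + 2*α*⟪B w p, N w⟫ + (Kb^2 + Lb*G)*‖p‖^2*α^2 := by
  have hG0 : (0:ℝ) ≤ G := le_trans (norm_nonneg _) hG
  have hBnorm : ∀ x, ‖B x‖ ≤ Kb := by
    intro x
    have lip : LipschitzWith Kb.toNNReal N := LipschitzWith.of_dist_le_mul fun a b => by
      simpa [dist_eq_norm, Real.coe_toNNReal Kb hKb] using hLip a b
    have h := (hN x).le_of_lipschitz lip
    rwa [Real.coe_toNNReal Kb hKb] at h
  set LL := Kb^2 + Lb*G with hLL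
  have hLL0 : 0 ≤ LL := by positivity
  set q : ℝ → ℝ := fun s => ⟪N (w + s • p), N (w + s • p)⟫ with hq
  have hline : ∀ s : ℝ, HasDerivAt (fun t : ℝ => w + t • p) p s := by
    intro s
    simpa using ((hasDerivAt_id s).smul_const p).const_add w
  have hφ : ∀ s : ℝ, HasDerivAt (fun t : ℝ => N (w + t • p)) (B (w + s • p) p) s :=
    fun s => (hN (w + s • p)).comp_hasDerivAt s (hline s)
  have hq' : ∀ s : ℝ, HasDerivAt q (2 * ⟪B (w + s • p) p, N (w + s • p)⟫) s := by
    intro s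
    have := (hφ s).inner ℝ (hφ s)
    have e : 2 * ⟪B (w + s • p) p, N (w + s • p)⟫ = ⟪N (w + s • p), B (w + s • p) p⟫ + ⟪B (w + s • p) p, N (w + s • p)⟫ := by
      rw [real_inner_comm]; ring
    rw [e]; exact this
  have hkey : ∀ s : ℝ, 0 ≤ s →
      2 * ⟪B (w + s • p) p, N (w + s • p)⟫ ≤ 2 * ⟪B w p, N w⟫ + 2 * LL * ‖p‖^2 * s := by
    intro s hs
    have hws : ‖(w + s • p) - w‖ = s * ‖p‖ := by
      simp [norm_smul, abs_of_nonneg hs]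
    have e1 : ⟪B (w + s • p) p, N (w + s • p)⟫ - ⟪B w p, N w⟫
        = ⟪B (w + s • p) p, N (w + s • p) - N w⟫ + ⟪(B (w + s • p) - B w) p, N w⟫ := by
      simp only [inner_sub_right, ContinuousLinearMap.sub_apply, inner_sub_left]
      ring
    have b1 : ⟪B (w + s • p) p, N (w + s • p) - N w⟫ ≤ Kb * ‖p‖ * (Kb * (s * ‖p‖)) := by
      refine le_trans (real_inner_le_norm _ _) ?_
      have h1 : ‖B (w + s • p) p‖ ≤ Kb * ‖p‖ :=
        le_trans ((B (w + s • p)).le_opNorm p)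
          (mul_le_mul_of_nonneg_right (hBnorm _) (norm_nonneg p))
      have h2 : ‖N (w + s • p) - N w‖ ≤ Kb * (s * ‖p‖) := by
        have h2' := hLip (w + s • p) w
        rwa [hws] at h2'
      exact mul_le_mul h1 h2 (norm_nonneg _) (by positivity)
    have b2 : ⟪(B (w + s • p) - B w) p, N w⟫ ≤ Lb * (s * ‖p‖) * ‖p‖ * G := by
      refine le_trans (real_inner_le_norm _ _) ?_
      have h1 : ‖(B (w + s • p) - B w) p‖ ≤ Lb * (s * ‖p‖) * ‖p‖ := by
        refine le_trans ((B (w + s • p) - B w).le_opNorm p) ?_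
        have := hBLip (w + s • p) w
        rw [hws] at this
        exact mul_le_mul_of_nonneg_right this (norm_nonneg p)
      exact mul_le_mul h1 hG (norm_nonneg _) (by positivity)
    have hsum : Kb * ‖p‖ * (Kb * (s * ‖p‖)) + Lb * (s * ‖p‖) * ‖p‖ * G = LL * ‖p‖^2 * s := by
      rw [hLL]; ring
    linarith [b1, b2, e1, hsum]
  set A := 2 * ⟪B w p, N w⟫ with hA
  set r : ℝ → ℝ := fun s => A * s + LL * ‖p‖^2 * s^2 - q s with hr
  have hr' : ∀ s : ℝ, HasDerivAt r (A + LL * ‖p‖^2 * (2*s)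
      - 2 * ⟪B (w + s • p) p, N (w + s • p)⟫) s := by
    intro s
    have h1 : HasDerivAt (fun s : ℝ => A * s + LL * ‖p‖^2 * s^2)
        (A + LL * ‖p‖^2 * (2*s)) s := by
      have := ((hasDerivAt_id s).const_mul A).add
        (((hasDerivAt_pow 2 s)).const_mul (LL * ‖p‖^2))
      simpa [mul_comm, mul_assoc, Pi.add_def] using this
    exact h1.sub (hq' s)
  have hmono : MonotoneOn r (Set.Icc 0 α) := by
    apply monotoneOn_of_deriv_nonneg (convex_Icc 0 α)
    · exact fun s _ => ((hr' s).continuousAt).continuousWithinAt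
    · intro s _
      exact ((hr' s).differentiableAt).differentiableWithinAt
    · intro s hs
      rw [interior_Icc] at hs
      rw [(hr' s).deriv]
      have := hkey s (le_of_lt hs.1)
      simp only [hA]
      nlinarith [this]
  have h0 : r 0 ≤ r α := hmono (Set.mem_Icc.2 ⟨le_refl 0, hα⟩) (Set.mem_Icc.2 ⟨hα, le_refl α⟩) hα
  have hq0 : q 0 = ‖N w‖^2 := by
    simp only [hq, zero_smul, add_zero]
    exact real_inner_self_eq_norm_sq _
  have hqα : q α = ‖N (w + α • p)‖^2 := real_inner_self_eq_norm_sq _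
  have h0' : - q 0 ≤ A * α + LL * ‖p‖^2 * α^2 - q α := by
    have : r 0 = - q 0 := by simp [hr]
    rw [this] at h0
    exact h0
  rw [hq0, hqα, hA] at h0'
  nlinarith [h0']

theorem Mreg_apply (H : E →L[ℝ] E) (φ : ℝ) (x : E) :
    Mreg H φ x = H (H x) + φ^2 • x := by
  simp [Mreg, ContinuousLinearMap.add_apply, ContinuousLinearMap.mul_apply]

theorem Mreg_inner_self (H : E →L[ℝ] E) (hsym : ∀ u v : E, ⟪H u, v⟫ = ⟪u, H v⟫)
    (φ : ℝ) (x : E) : ⟪Mreg H φ x, x⟫ = ‖H x‖^2 + φ^2 * ‖x‖^2 := by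
  rw [Mreg_apply, inner_add_left, real_inner_smul_left, hsym (H x) x,
    real_inner_self_eq_norm_sq, real_inner_self_eq_norm_sq]

theorem Mreg_lower (H : E →L[ℝ] E) (hsym : ∀ u v : E, ⟪H u, v⟫ = ⟪u, H v⟫)
    (φ : ℝ) (x : E) : φ^2 * ‖x‖ ≤ ‖Mreg H φ x‖ := by
  rcases eq_or_ne x 0 with rfl | hx
  · simp
  · have hx0 : 0 < ‖x‖ := norm_pos_iff.2 hx
    have h1 : φ^2 * ‖x‖^2 ≤ ⟪Mreg H φ x, x⟫ := by
      rw [Mreg_inner_self H hsym]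
      nlinarith [sq_nonneg ‖H x‖]
    have h2 : ⟪Mreg H φ x, x⟫ ≤ ‖Mreg H φ x‖ * ‖x‖ := real_inner_le_norm _ _
    nlinarith [h1, h2, hx0]

theorem Mreg_lower_H (H : E →L[ℝ] E) (hsym : ∀ u v : E, ⟪H u, v⟫ = ⟪u, H v⟫)
    (φ : ℝ) (hφ : 0 ≤ φ) (x : E) : φ * ‖H x‖ ≤ ‖Mreg H φ x‖ := by
  have key : (φ * ‖H x‖)^2 ≤ ‖Mreg H φ x‖^2 := by
    have e : ‖Mreg H φ x‖^2 = ‖H (H x)‖^2 + 2 * φ^2 * ‖H x‖^2 + φ^4 * ‖x‖^2 := by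
      rw [← real_inner_self_eq_norm_sq, Mreg_apply, inner_add_left, inner_add_right,
        inner_add_right, real_inner_smul_left, real_inner_smul_left, real_inner_smul_right,
        real_inner_smul_right]
      have hx1 : ⟪H (H x), x⟫ = ‖H x‖^2 := by
        rw [hsym (H x) x]; exact real_inner_self_eq_norm_sq _
      have hx2 : ⟪x, H (H x)⟫ = ‖H x‖^2 := by rw [real_inner_comm]; exact hx1
      rw [hx1, hx2, real_inner_self_eq_norm_sq, real_inner_self_eq_norm_sq]
      ring
    nlinarith [sq_nonneg ‖H (H x)‖, sq_nonneg φ, sq_nonneg (φ^2*‖x‖), sq_nonneg ‖H x‖]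
  exact le_of_pow_le_pow_left₀ two_ne_zero (norm_nonneg _) key

theorem Mreg_comm (H : E →L[ℝ] E) (φ : ℝ) (x : E) :
    Mreg H φ (H x) = H (Mreg H φ x) := by
  rw [Mreg_apply, Mreg_apply, map_add, map_smul]

theorem Mreg_surj (H : E →L[ℝ] E) (hsym : ∀ u v : E, ⟪H u, v⟫ = ⟪u, H v⟫)
    (φ : ℝ) (hφ : 0 < φ) : Function.Surjective (Mreg H φ) := by
  have hinj : Function.Injective (Mreg H φ) := by
    intro a b hab
    have h := Mreg_lower H hsym φ (a - b)
    rw [map_sub, hab, sub_self] at h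
    simp only [norm_zero] at h
    have h2 : ‖a - b‖ = 0 := by nlinarith [norm_nonneg (a - b), pow_pos hφ 2]
    exact sub_eq_zero.1 (norm_eq_zero.1 h2)
  exact LinearMap.injective_iff_surjective.1 hinj

end Helpers

/-- **Theorem 4 (Convergence under Case 2*).** Under Assumption 1, with inexact local
directions `vᵢ ≈ (Hᵢ² + φ²I)⁻¹Hᵢg` satisfying the residual inexactness condition, if the
descent condition holds for `p = −(1/m)∑vᵢ`, every step-size in `(0, τ̃₂]` with
`τ̃₂ = 2(1−ρ)θ/(Lc²)` passes the line search and yields the stated reduction; moreover if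
`g ≠ 0` then `θ ≤ c√L`, whence `0 ≤ 1 − 2τ̃₂ρθ < 1`. -/
theorem stmt_12 {d m : ℕ} (hm : 0 < m)
    (f : Fin m → EuclideanSpace ℝ (Fin d) → ℝ)
    (hf : ∀ i, ContDiff ℝ 2 (f i))
    (K L : Fin m → ℝ) (hK : ∀ i, 0 < K i) (hL : ∀ i, 0 < L i)
    (hgrad : ∀ i (x y : EuclideanSpace ℝ (Fin d)),
      ‖gradient (f i) x - gradient (f i) y‖ ≤ K i * ‖x - y‖)
    (hhess : ∀ i (x y : EuclideanSpace ℝ (Fin d)),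
      ‖hessI (f i) x - hessI (f i) y‖ ≤ L i * ‖x - y‖)
    (w : EuclideanSpace ℝ (Fin d)) (G : ℝ) (hG : ‖gradF f w‖ ≤ G)
    (ρ θ φ : ℝ) (hρ0 : 0 < ρ) (hρ1 : ρ < 1) (hθ : 0 < θ) (hφ : 0 < φ)
    -- the inexact Case 2 local directions vᵢ ≈ (Hᵢ² + φ²I)⁻¹Hᵢg
    (ε : Fin m → ℝ) (hε0 : ∀ i, 0 ≤ ε i) (hε1 : ∀ i, ε i < 1)
    (v : Fin m → EuclideanSpace ℝ (Fin d))
    (hvres : ∀ i, ‖Mreg (hessI (f i) w) φ (v i) - hessI (f i) w (gradF f w)‖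
      ≤ ε i * ‖hessI (f i) w (gradF f w)‖)
    (pbar : EuclideanSpace ℝ (Fin d)) (hpbar : pbar = -((1 / (m : ℝ)) • ∑ i, v i))
    (hcase : ⟪pbar, hessF f w (gradF f w)⟫ ≤ -θ * ‖gradF f w‖ ^ 2)
    (c τ : ℝ)
    (hc : c = (1 / φ) * (1 + (1 / (m : ℝ)) * ∑ i, ε i * ((K i ^ 2 + φ ^ 2) / φ ^ 2)))
    (hτ : τ = 2 * (1 - ρ) * θ / (Lconst K L G * c ^ 2)) :
    (∀ α : ℝ, 0 < α → α ≤ τ →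
      ‖gradF f (w + α • pbar)‖ ^ 2
          ≤ ‖gradF f w‖ ^ 2 + 2 * α * ρ * ⟪pbar, hessF f w (gradF f w)⟫ ∧
      ‖gradF f w‖ ^ 2 + 2 * α * ρ * ⟪pbar, hessF f w (gradF f w)⟫
          ≤ (1 - 2 * α * ρ * θ) * ‖gradF f w‖ ^ 2) ∧
    ‖gradF f (w + τ • pbar)‖ ^ 2 ≤ (1 - 2 * τ * ρ * θ) * ‖gradF f w‖ ^ 2 ∧
    (gradF f w ≠ 0 →
      θ ≤ c * Real.sqrt (Lconst K L G) ∧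
      0 ≤ 1 - 2 * τ * ρ * θ ∧ 1 - 2 * τ * ρ * θ < 1) := by
  classical
  have hm' : (0:ℝ) < m := Nat.cast_pos.2 hm
  haveI : Nonempty (Fin m) := ⟨⟨0, hm⟩⟩
  -- abbreviations
  have hfavg : ContDiff ℝ 2 (avgFun f) := avg_contDiff f hf
  set g : EuclideanSpace ℝ (Fin d) := gradF f w with hg
  have hgdef : g = gradient (avgFun f) w := rfl
  set LL : ℝ := Lconst K L G with hLLdef
  set Kb : ℝ := (1/(m:ℝ)) * ∑ i, K i with hKbdef
  set Lb : ℝ := (1/(m:ℝ)) * ∑ i, L i with hLbdef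
  have hLLKb : LL = Kb^2 + Lb*G := rfl
  have hG0 : (0:ℝ) ≤ G := le_trans (norm_nonneg _) hG
  have hKb0 : 0 < Kb := by
    have : 0 < ∑ i, K i := Finset.sum_pos (fun i _ => hK i) Finset.univ_nonempty
    positivity
  have hLb0 : 0 < Lb := by
    have : 0 < ∑ i, L i := Finset.sum_pos (fun i _ => hL i) Finset.univ_nonempty
    positivity
  have hLL0 : 0 < LL := by rw [hLLKb]; positivity
  -- the gradient map and Hessians
  set N : EuclideanSpace ℝ (Fin d) → EuclideanSpace ℝ (Fin d) := gradient (avgFun f) with hNdef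
  set B : EuclideanSpace ℝ (Fin d) → (EuclideanSpace ℝ (Fin d) →L[ℝ] EuclideanSpace ℝ (Fin d)) :=
    fun x => fderiv ℝ (gradient (avgFun f)) x with hBdef
  have hBw : hessF f w = B w := rfl
  have hNdiff : ∀ x, HasFDerivAt N (B x) x := fun x =>
    (((grad_contDiff (avgFun f) hfavg).differentiable (by norm_num)) x).hasFDerivAt
  have hLipN : ∀ x y, ‖N x - N y‖ ≤ Kb * ‖x - y‖ := by
    intro x y
    rw [hNdef, grad_avg f hf x, grad_avg f hf y, ← smul_sub, ← Finset.sum_sub_distrib, norm_smul]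
    have h1 : ‖∑ i, (gradient (f i) x - gradient (f i) y)‖ ≤ ∑ i, K i * ‖x - y‖ :=
      (norm_sum_le _ _).trans (Finset.sum_le_sum fun i _ => hgrad i x y)
    have h2 : ‖(1/(m:ℝ))‖ = 1/(m:ℝ) := by
      rw [Real.norm_eq_abs, abs_of_pos]; positivity
    rw [h2, hKbdef]
    calc (1/(m:ℝ)) * ‖∑ i, (gradient (f i) x - gradient (f i) y)‖
        ≤ (1/(m:ℝ)) * ∑ i, K i * ‖x - y‖ := by
          apply mul_le_mul_of_nonneg_left h1; positivity
      _ = ((1/(m:ℝ)) * ∑ i, K i) * ‖x - y‖ := by rw [← Finset.sum_mul]; ring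
  have hBLip : ∀ x y, ‖B x - B y‖ ≤ Lb * ‖x - y‖ := by
    intro x y
    have e : B x - B y = (1/(m:ℝ)) • ∑ i, (fderiv ℝ (gradient (f i)) x
        - fderiv ℝ (gradient (f i)) y) := by
      show fderiv ℝ (gradient (avgFun f)) x - fderiv ℝ (gradient (avgFun f)) y = _
      rw [hessF_sum f hf x, hessF_sum f hf y, Finset.sum_sub_distrib]
      exact (smul_sub _ _ _).symm
    rw [e]
    have hns : ‖(1/(m:ℝ)) • ∑ i, (fderiv ℝ (gradient (f i)) x - fderiv ℝ (gradient (f i)) y)‖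
        = ‖(1/(m:ℝ))‖ * ‖∑ i, (fderiv ℝ (gradient (f i)) x - fderiv ℝ (gradient (f i)) y)‖ :=
      norm_smul _ _
    rw [hns]
    have h1 : ‖∑ i, (fderiv ℝ (gradient (f i)) x - fderiv ℝ (gradient (f i)) y)‖
        ≤ ∑ i, L i * ‖x - y‖ :=
      (norm_sum_le _ _).trans (Finset.sum_le_sum fun i _ => hhess i x y)
    have h2 : ‖(1/(m:ℝ))‖ = 1/(m:ℝ) := by
      rw [Real.norm_eq_abs, abs_of_pos]; positivity
    rw [h2, hLbdef]
    calc (1/(m:ℝ)) * ‖∑ i, (fderiv ℝ (gradient (f i)) x - fderiv ℝ (gradient (f i)) y)‖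
        ≤ (1/(m:ℝ)) * ∑ i, L i * ‖x - y‖ := by
          apply mul_le_mul_of_nonneg_left h1; positivity
      _ = ((1/(m:ℝ)) * ∑ i, L i) * ‖x - y‖ := by rw [← Finset.sum_mul]; ring
  -- bound on ‖pbar‖
  have hc0 : 0 < c := by
    have hS : 0 ≤ (1/(m:ℝ)) * ∑ i, ε i * ((K i ^ 2 + φ ^ 2) / φ ^ 2) := by
      have : 0 ≤ ∑ i, ε i * ((K i ^ 2 + φ ^ 2) / φ ^ 2) :=
        Finset.sum_nonneg fun i _ => mul_nonneg (hε0 i) (by positivity)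
      positivity
    rw [hc]
    have h1 : (0:ℝ) < 1/φ := by positivity
    nlinarith [h1, hS]
  have hvbound : ∀ i, ‖v i‖ ≤ (1/φ) * (1 + ε i * ((K i ^ 2 + φ ^ 2) / φ ^ 2)) * ‖g‖ := by
    intro i
    set Hi : EuclideanSpace ℝ (Fin d) →L[ℝ] EuclideanSpace ℝ (Fin d) := hessI (f i) w with hHidef
    have hsymi : ∀ u z : EuclideanSpace ℝ (Fin d), ⟪Hi u, z⟫ = ⟪u, Hi z⟫ :=
      fun u z => hess_symm (f i) (hf i) w u z
    have hHin : ‖Hi‖ ≤ K i := hess_norm_le (f i) (K i) (hK i).le (hgrad i) w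
    obtain ⟨b, hb⟩ := Mreg_surj Hi hsymi φ hφ g
    have hTa : Mreg Hi φ (Hi b) = Hi g := by rw [Mreg_comm, hb]
    have ha : ‖Hi b‖ ≤ ‖g‖ / φ := by
      have := Mreg_lower_H Hi hsymi φ hφ.le b
      rw [hb] at this
      rw [le_div_iff₀ hφ]
      linarith [this]
    have hHg : ‖Hi g‖ ≤ K i * ‖g‖ :=
      le_trans (Hi.le_opNorm g) (mul_le_mul_of_nonneg_right hHin (norm_nonneg g))
    have he : ‖v i - Hi b‖ ≤ ε i * (K i * ‖g‖) / φ^2 := by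
      have h1 := Mreg_lower Hi hsymi φ (v i - Hi b)
      rw [map_sub, hTa] at h1
      have h2 := hvres i
      rw [le_div_iff₀ (by positivity : (0:ℝ) < φ^2)]
      calc ‖v i - Hi b‖ * φ^2 = φ^2 * ‖v i - Hi b‖ := by ring
        _ ≤ ‖Mreg Hi φ (v i) - Hi g‖ := h1
        _ ≤ ε i * ‖Hi g‖ := h2
        _ ≤ ε i * (K i * ‖g‖) := mul_le_mul_of_nonneg_left hHg (hε0 i)
    have htri : ‖v i‖ ≤ ‖g‖/φ + ε i * (K i * ‖g‖) / φ^2 := by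
      calc ‖v i‖ = ‖Hi b + (v i - Hi b)‖ := by congr 1; abel
        _ ≤ ‖Hi b‖ + ‖v i - Hi b‖ := norm_add_le _ _
        _ ≤ ‖g‖/φ + ε i * (K i * ‖g‖) / φ^2 := add_le_add ha he
    refine le_trans htri ?_
    rw [← sub_nonneg]
    have hexp : (1/φ) * (1 + ε i * ((K i ^ 2 + φ ^ 2) / φ ^ 2)) * ‖g‖
        - (‖g‖/φ + ε i * (K i * ‖g‖) / φ^2)
        = ε i * ‖g‖ * ((K i - φ)^2 + K i * φ) / φ^3 := by
      field_simp
      ring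
    rw [hexp]
    have hmid : 0 ≤ (K i - φ)^2 + K i * φ := by nlinarith [sq_nonneg (K i - φ), (hK i).le, hφ.le]
    apply div_nonneg _ (by positivity)
    exact mul_nonneg (mul_nonneg (hε0 i) (norm_nonneg _)) hmid
  have hpc : ‖pbar‖ ≤ c * ‖g‖ := by
    rw [hpbar, norm_neg, norm_smul]
    have h2 : ‖(1/(m:ℝ))‖ = 1/(m:ℝ) := by
      rw [Real.norm_eq_abs, abs_of_pos]; positivity
    rw [h2]
    have h1 : ‖∑ i, v i‖ ≤ ∑ i, (1/φ) * (1 + ε i * ((K i ^ 2 + φ ^ 2) / φ ^ 2)) * ‖g‖ :=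
      (norm_sum_le _ _).trans (Finset.sum_le_sum fun i _ => hvbound i)
    have h3 : (1/(m:ℝ)) * ∑ i, (1/φ) * (1 + ε i * ((K i ^ 2 + φ ^ 2) / φ ^ 2)) * ‖g‖
        = c * ‖g‖ := by
      rw [hc]
      rw [Finset.sum_congr rfl (fun i _ => by ring :
        ∀ i ∈ Finset.univ, (1/φ) * (1 + ε i * ((K i ^ 2 + φ ^ 2) / φ ^ 2)) * ‖g‖
          = (1/φ) * ‖g‖ + (1/φ) * ‖g‖ * (ε i * ((K i ^ 2 + φ ^ 2) / φ ^ 2)))]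
      rw [Finset.sum_add_distrib, Finset.sum_const, Finset.card_univ, Fintype.card_fin,
        ← Finset.mul_sum]
      field_simp [hφ.ne']
      ring_nf
      rw [mul_comm φ ‖g‖, mul_assoc ‖g‖ φ φ⁻¹, mul_inv_cancel₀ hφ.ne', mul_one]
    calc (1/(m:ℝ)) * ‖∑ i, v i‖
        ≤ (1/(m:ℝ)) * ∑ i, (1/φ) * (1 + ε i * ((K i ^ 2 + φ ^ 2) / φ ^ 2)) * ‖g‖ := by
          apply mul_le_mul_of_nonneg_left h1; positivity
      _ = c * ‖g‖ := h3
  -- symmetry of the averaged Hessian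
  have hsymB : ∀ u z : EuclideanSpace ℝ (Fin d), ⟪B w u, z⟫ = ⟪u, B w z⟫ :=
    fun u z => hess_symm (avgFun f) hfavg w u z
  set P : ℝ := ⟪pbar, hessF f w g⟫ with hPdef
  have hPB : ⟪B w pbar, N w⟫ = P := by
    rw [hPdef, hBw]
    exact hsymB pbar g
  have hNg : N w = g := rfl
  have hGN : ‖N w‖ ≤ G := by rw [hNg]; exact hG
  have hgoal : ∀ x : EuclideanSpace ℝ (Fin d), gradF f x = N x := fun _ => rfl
  simp only [hgoal]
  clear_value N B g P LL Kb Lb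
  -- main per-α estimate
  have mainA : ∀ α : ℝ, 0 < α → α ≤ τ →
      ‖N (w + α • pbar)‖ ^ 2 ≤ ‖g‖ ^ 2 + 2 * α * ρ * P ∧
      ‖g‖ ^ 2 + 2 * α * ρ * P ≤ (1 - 2 * α * ρ * θ) * ‖g‖ ^ 2 := by
    intro α hα0 hατ
    have hdes := descent_core N B hNdiff Kb Lb hKb0.le hLb0.le hLipN hBLip w pbar G hGN α hα0.le
    rw [hPB, hNg] at hdes
    have hpc2 : ‖pbar‖^2 ≤ c^2 * ‖g‖^2 := by nlinarith [hpc, norm_nonneg pbar, norm_nonneg g]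
    have hden : 0 < LL * c^2 := mul_pos hLL0 (pow_pos hc0 2)
    have hLLc : LL * c^2 * α ≤ 2*(1-ρ)*θ := by
      rw [hτ, le_div_iff₀ hden] at hατ
      linarith [hατ]
    have h1 : (Kb^2 + Lb*G)*‖pbar‖^2*α^2 ≤ (LL * c^2 * α) * (α * ‖g‖^2) := by
      rw [← hLLKb]
      calc LL*‖pbar‖^2*α^2 ≤ LL * (c^2*‖g‖^2) * α^2 := by
            apply mul_le_mul_of_nonneg_right _ (sq_nonneg α)
            exact mul_le_mul_of_nonneg_left hpc2 hLL0.le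
        _ = (LL * c^2 * α) * (α * ‖g‖^2) := by ring
    have h2 : (LL * c^2 * α) * (α * ‖g‖^2) ≤ (2*(1-ρ)*θ) * (α * ‖g‖^2) := by
      apply mul_le_mul_of_nonneg_right hLLc
      exact mul_nonneg hα0.le (pow_nonneg (norm_nonneg _) 2)
    have h3 : θ * ‖g‖^2 ≤ -P := by linarith [hcase]
    have h4 : 2*α*(1-ρ) * (θ*‖g‖^2) ≤ 2*α*(1-ρ) * (-P) := by
      apply mul_le_mul_of_nonneg_left h3
      nlinarith [hα0, hρ1]
    constructor
    · linarith [hdes, h1, h2, h4]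
    · have h5 : 2*α*ρ * P ≤ 2*α*ρ * (-(θ*‖g‖^2)) := by
        apply mul_le_mul_of_nonneg_left _ (by positivity)
        linarith [h3]
      nlinarith [h5]
  refine ⟨fun α h1 h2 => mainA α h1 h2, ?_, ?_⟩
  · -- at α = τ
    have hτ0 : 0 < τ := by
      rw [hτ]
      have hnum : 0 < 2*(1-ρ)*θ := by nlinarith [hρ1, hθ]
      exact div_pos hnum (mul_pos hLL0 (pow_pos hc0 2))
    obtain ⟨u1, u2⟩ := mainA τ hτ0 le_rfl
    exact le_trans u1 u2
  · -- the final claims when g ≠ 0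
    intro hgne
    have hgn : 0 < ‖g‖ := norm_pos_iff.2 hgne
    have hBwn : ‖B w‖ ≤ Kb := by
      have lip : LipschitzWith Kb.toNNReal N := LipschitzWith.of_dist_le_mul fun a b => by
        simpa [dist_eq_norm, Real.coe_toNNReal Kb hKb0.le] using hLipN a b
      have h := (hNdiff w).le_of_lipschitz lip
      rwa [Real.coe_toNNReal Kb hKb0.le] at h
    have hθKb : θ ≤ c * Kb := by
      have h3 : θ * ‖g‖^2 ≤ -P := by linarith [hcase]
      have h4 : -P ≤ ‖pbar‖ * ‖hessF f w g‖ := by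
        rw [hPdef]
        have habs := abs_real_inner_le_norm pbar (hessF f w g)
        linarith [neg_le_abs (⟪pbar, hessF f w g⟫ : ℝ), habs]
      have h5 : ‖hessF f w g‖ ≤ Kb * ‖g‖ := by
        rw [hBw, ← hNg]
        exact le_trans ((B w).le_opNorm _) (mul_le_mul_of_nonneg_right hBwn (norm_nonneg _))
      have h6 : ‖pbar‖ * ‖hessF f w g‖ ≤ (c * ‖g‖) * (Kb * ‖g‖) := by
        apply mul_le_mul hpc h5 (norm_nonneg _)
        exact mul_nonneg hc0.le (norm_nonneg _)
      have h7 : θ * ‖g‖^2 ≤ (c * Kb) * ‖g‖^2 := by nlinarith [h3, h4, h6]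
      have hg2 : 0 < ‖g‖^2 := pow_pos hgn 2
      exact le_of_mul_le_mul_right (by linarith [h7]) hg2
    have hKbL : Kb ≤ Real.sqrt LL := by
      have h1 : Kb^2 ≤ LL := by rw [hLLKb]; nlinarith [hLb0, hG0]
      calc Kb = Real.sqrt (Kb^2) := (Real.sqrt_sq hKb0.le).symm
        _ ≤ Real.sqrt LL := Real.sqrt_le_sqrt h1
    have hθcL : θ ≤ c * Real.sqrt LL :=
      le_trans hθKb (mul_le_mul_of_nonneg_left hKbL hc0.le)
    refine ⟨hθcL, ?_, ?_⟩
    · -- 0 ≤ 1 - 2τρθ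
      have hθ2 : θ^2 ≤ c^2 * LL := by
        have := pow_le_pow_left₀ hθ.le hθcL 2
        calc θ^2 ≤ (c * Real.sqrt LL)^2 := this
          _ = c^2 * (Real.sqrt LL)^2 := by ring
          _ = c^2 * LL := by rw [Real.sq_sqrt hLL0.le]
      have hden : 0 < LL * c^2 := mul_pos hLL0 (pow_pos hc0 2)
      have heq : 2*τ*ρ*θ = (4*ρ*(1-ρ)*θ^2) / (LL * c^2) := by
        rw [hτ]
        field_simp
        ring
      have hle1 : 2*τ*ρ*θ ≤ 1 := by
        rw [heq, div_le_one hden]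
        nlinarith [hθ2, sq_nonneg (2*ρ-1), mul_pos hρ0 (sub_pos.2 hρ1),
          mul_le_mul_of_nonneg_left hθ2 (le_of_lt (mul_pos (mul_pos (by norm_num : (0:ℝ) < 4) hρ0) (sub_pos.2 hρ1))),
          mul_nonneg (sq_nonneg (2*ρ-1)) hden.le]
      linarith [hle1]
    · -- 1 - 2τρθ < 1
      have hτ0 : 0 < τ := by
        rw [hτ]
        have hnum : 0 < 2*(1-ρ)*θ := by nlinarith [hρ1, hθ]
        exact div_pos hnum (mul_pos hLL0 (pow_pos hc0 2))
      nlinarith [mul_pos (mul_pos (mul_pos (by norm_num : (0:ℝ) < 2) hτ0) hρ0) hθ]
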